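/- arXiv:1212.3151 — 3 statements merged into one kernel-verified Lean document; each statement's English description precedes it below -/
import Mathlib

section
/- Let r(y) = y^2 e^{-y}/(1 - e^{-y}) for y > 0, extended by r(0) = 0, and let y_max be the unique maximizer of r on (0, ∞). Then r is strictly concave on the interval [0, y_max]. -/
open Real

private noncomputable def gfun (y : ℝ) : ℝ := y^2 / (Real.exp y - 1)
private noncomputable def gfun1 (y : ℝ) : ℝ :=
  (2*y*(Real.exp y - 1) - y^2*Real.exp y) / (Real.exp y - 1)^2
private noncomputable def gfun2 (y : ℝ) : ℝ :=
  ((2 + y^2 - 4*y)*(Real.exp y)^2 + (y^2 + 4*y - 4)*Real.exp y + 2) / (Real.exp y - 1)^3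

private lemma expm1_pos' {y : ℝ} (hy : 0 < y) : 0 < Real.exp y - 1 := by
  have := Real.add_one_lt_exp (ne_of_gt hy); linarith

private lemma req' (y : ℝ) : y^2 * Real.exp (-y) / (1 - Real.exp (-y)) = gfun y := by
  unfold gfun
  rcases eq_or_ne y 0 with rfl | hy
  · simp
  · have he : Real.exp y ≠ 0 := (Real.exp_pos y).ne'
    have h1 : Real.exp y - 1 ≠ 0 := by
      intro h; exact hy ((Real.exp_eq_one_iff y).1 (by linarith))
    have h2 : 1 - Real.exp (-y) ≠ 0 := by
      rw [Real.exp_neg]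
      intro h
      apply h1
      field_simp at h
      linarith
    rw [Real.exp_neg] at h2 ⊢
    rw [div_eq_div_iff h2 h1]
    field_simp

private lemma aux_nonneg' (F F' : ℝ → ℝ) (hd : ∀ x, HasDerivAt F (F' x) x) (h0 : F 0 = 0)
    (hnn : ∀ x, 0 ≤ x → 0 ≤ F' x) : ∀ y, 0 ≤ y → 0 ≤ F y := by
  intro y hy
  have hmono : MonotoneOn F (Set.Ici 0) := by
    apply monotoneOn_of_deriv_nonneg (convex_Ici 0)
    · exact fun x _ => ((hd x).differentiableAt.continuousAt).continuousWithinAt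
    · intro x _; exact (hd x).differentiableAt.differentiableWithinAt
    · intro x hx
      rw [(hd x).deriv]
      exact hnn x (le_of_lt (by simpa using hx))
  have := hmono (Set.self_mem_Ici) hy hy
  linarith [h0 ▸ this]

private lemma hasDerivAt_expneg' (x : ℝ) :
    HasDerivAt (fun x : ℝ => Real.exp (-x)) (-Real.exp (-x)) x := by
  exact ((Real.hasDerivAt_exp (-x)).comp x (hasDerivAt_neg x)).congr_deriv (by ring)

private lemma expLB1' (y : ℝ) : 1 - y ≤ Real.exp (-y) := by
  have := Real.add_one_le_exp (-y); linarith

private lemma expUB2' (y : ℝ) (hy : 0 ≤ y) : Real.exp (-y) ≤ 1 - y + y^2/2 := by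
  have H := aux_nonneg' (fun x => 1 - x + x^2/2 - Real.exp (-x))
    (fun x => -1 + x + Real.exp (-x))
    (fun x => by
      have h2 : HasDerivAt (fun x : ℝ => 1 - x + x^2/2) (-1 + x) x := by
        have h3 : HasDerivAt (fun x : ℝ => 1 - x) (-1) x := by
          simpa using (hasDerivAt_id x).const_sub 1
        exact (h3.add ((hasDerivAt_pow 2 x).div_const 2)).congr_deriv (by push_cast; ring)
      have := h2.sub (hasDerivAt_expneg' x)
      exact this.congr_deriv (by ring))
    (by norm_num)
    (fun x hx => by have := expLB1' x; linarith)
  have := H y hy; linarith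

private lemma expLB3' (y : ℝ) (hy : 0 ≤ y) : 1 - y + y^2/2 - y^3/6 ≤ Real.exp (-y) := by
  have H := aux_nonneg' (fun x => Real.exp (-x) - (1 - x + x^2/2 - x^3/6))
    (fun x => -Real.exp (-x) - (-1 + x - x^2/2))
    (fun x => by
      have h2 : HasDerivAt (fun x : ℝ => 1 - x + x^2/2 - x^3/6) (-1 + x - x^2/2) x := by
        have h3 : HasDerivAt (fun x : ℝ => 1 - x + x^2/2) (-1 + x) x := by
          have h4 : HasDerivAt (fun x : ℝ => 1 - x) (-1) x := by
            simpa using (hasDerivAt_id x).const_sub 1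
          exact (h4.add ((hasDerivAt_pow 2 x).div_const 2)).congr_deriv (by push_cast; ring)
        have := h3.sub ((hasDerivAt_pow 3 x).div_const 6)
        exact this.congr_deriv (by push_cast; ring)
      exact (hasDerivAt_expneg' x).sub h2)
    (by norm_num)
    (fun x hx => by have := expUB2' x hx; linarith)
  have := H y hy; linarith

private lemma expUB4' (y : ℝ) (hy : 0 ≤ y) :
    Real.exp (-y) ≤ 1 - y + y^2/2 - y^3/6 + y^4/24 := by
  have H := aux_nonneg' (fun x => (1 - x + x^2/2 - x^3/6 + x^4/24) - Real.exp (-x))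
    (fun x => (-1 + x - x^2/2 + x^3/6) + Real.exp (-x))
    (fun x => by
      have h2 : HasDerivAt (fun x : ℝ => 1 - x + x^2/2 - x^3/6 + x^4/24)
          (-1 + x - x^2/2 + x^3/6) x := by
        have h3 : HasDerivAt (fun x : ℝ => 1 - x) (-1) x := by
          simpa using (hasDerivAt_id x).const_sub 1
        have := ((h3.add ((hasDerivAt_pow 2 x).div_const 2)).sub
          ((hasDerivAt_pow 3 x).div_const 6)).add ((hasDerivAt_pow 4 x).div_const 24)
        exact this.congr_deriv (by push_cast; ring)
      have := h2.sub (hasDerivAt_expneg' x)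
      exact this.congr_deriv (by ring))
    (by norm_num)
    (fun x hx => by have := expLB3' x hx; linarith)
  have := H y hy; linarith

private lemma expLB5' (y : ℝ) (hy : 0 ≤ y) :
    1 - y + y^2/2 - y^3/6 + y^4/24 - y^5/120 ≤ Real.exp (-y) := by
  have H := aux_nonneg'
    (fun x => Real.exp (-x) - (1 - x + x^2/2 - x^3/6 + x^4/24 - x^5/120))
    (fun x => -Real.exp (-x) - (-1 + x - x^2/2 + x^3/6 - x^4/24))
    (fun x => by
      have h3 : HasDerivAt (fun x : ℝ => 1 - x) (-1) x := by
        simpa using (hasDerivAt_id x).const_sub 1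
      have h2 : HasDerivAt (fun x : ℝ => 1 - x + x^2/2 - x^3/6 + x^4/24 - x^5/120)
          (-1 + x - x^2/2 + x^3/6 - x^4/24) x := by
        have := (((h3.add ((hasDerivAt_pow 2 x).div_const 2)).sub
          ((hasDerivAt_pow 3 x).div_const 6)).add ((hasDerivAt_pow 4 x).div_const 24)).sub
          ((hasDerivAt_pow 5 x).div_const 120)
        exact this.congr_deriv (by push_cast; ring)
      exact (hasDerivAt_expneg' x).sub h2)
    (by norm_num)
    (fun x hx => by have := expUB4' x hx; linarith)
  have := H y hy; linarith

private lemma expUB6' (y : ℝ) (hy : 0 ≤ y) :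
    Real.exp (-y) ≤ 1 - y + y^2/2 - y^3/6 + y^4/24 - y^5/120 + y^6/720 := by
  have H := aux_nonneg'
    (fun x => (1 - x + x^2/2 - x^3/6 + x^4/24 - x^5/120 + x^6/720) - Real.exp (-x))
    (fun x => (-1 + x - x^2/2 + x^3/6 - x^4/24 + x^5/120) + Real.exp (-x))
    (fun x => by
      have h3 : HasDerivAt (fun x : ℝ => 1 - x) (-1) x := by
        simpa using (hasDerivAt_id x).const_sub 1
      have h2 : HasDerivAt
          (fun x : ℝ => 1 - x + x^2/2 - x^3/6 + x^4/24 - x^5/120 + x^6/720)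
          (-1 + x - x^2/2 + x^3/6 - x^4/24 + x^5/120) x := by
        have := ((((h3.add ((hasDerivAt_pow 2 x).div_const 2)).sub
          ((hasDerivAt_pow 3 x).div_const 6)).add ((hasDerivAt_pow 4 x).div_const 24)).sub
          ((hasDerivAt_pow 5 x).div_const 120)).add ((hasDerivAt_pow 6 x).div_const 720)
        exact this.congr_deriv (by push_cast; ring)
      have := h2.sub (hasDerivAt_expneg' x)
      exact this.congr_deriv (by ring))
    (by norm_num)
    (fun x hx => by have := expLB5' x hx; linarith)
  have := H y hy; linarith

private lemma QLneg' (y : ℝ) (h0 : 0 < y) (h2 : y < 2) :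
    (2*(1 - (1 - y + y^2/2 - y^3/6 + y^4/24 - y^5/120))^2
      - (y^2 + 4*y)*(1 - (1 - y + y^2/2 - y^3/6 + y^4/24 - y^5/120)) + 2*y^2) < 0 := by
  have hy : 0 < 2 - y := by linarith
  have H : ∀ i j : ℕ, 0 < y^i * (2-y)^j := fun i j =>
    mul_pos (pow_pos h0 i) (pow_pos hy j)
  linarith [H 3 7, H 4 6, H 5 5, H 6 4, H 7 3, H 8 2, H 9 1, H 10 0]

private lemma QUneg' (y : ℝ) (h0 : 0 < y) (h2 : y < 2) :
    (2*(1 - (1 - y + y^2/2 - y^3/6 + y^4/24 - y^5/120 + y^6/720))^2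
      - (y^2 + 4*y)*(1 - (1 - y + y^2/2 - y^3/6 + y^4/24 - y^5/120 + y^6/720)) + 2*y^2) < 0 := by
  have hy : 0 < 2 - y := by linarith
  have H : ∀ i j : ℕ, 0 < y^i * (2-y)^j := fun i j =>
    mul_pos (pow_pos h0 i) (pow_pos hy j)
  linarith [H 3 9, H 4 8, H 5 7, H 6 6, H 7 5, H 8 4, H 9 3, H 10 2, H 11 1, H 12 0]

private lemma quad_interp' (w L U b c : ℝ) (hL : L ≤ w) (hU : w ≤ U)
    (hQL : 2*(1-L)^2 - b*(1-L) + c < 0) (hQU : 2*(1-U)^2 - b*(1-U) + c < 0) :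
    2*(1-w)^2 - b*(1-w) + c < 0 := by
  rcases eq_or_lt_of_le hU with rfl | hwU
  · exact hQU
  · have key : (U - L) * (2*(1-w)^2 - b*(1-w) + c)
        = (U - w) * (2*(1-L)^2 - b*(1-L) + c) + (w - L) * (2*(1-U)^2 - b*(1-U) + c)
          - 2*(w - L)*(U - w)*(U - L) := by ring
    have h1 : (U - w) * (2*(1-L)^2 - b*(1-L) + c) < 0 :=
      mul_neg_of_pos_of_neg (sub_pos.2 hwU) hQL
    have h2 : (w - L) * (2*(1-U)^2 - b*(1-U) + c) ≤ 0 :=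
      mul_nonpos_of_nonneg_of_nonpos (sub_nonneg.2 hL) hQU.le
    have h3 : 0 ≤ 2*(w - L)*(U - w)*(U - L) := by
      have := mul_nonneg (mul_nonneg (sub_nonneg.2 hL) (sub_pos.2 hwU).le)
        (sub_nonneg.2 (hL.trans hU))
      nlinarith [this]
    have h4 : (U - L) * (2*(1-w)^2 - b*(1-w) + c) < 0 := by linarith [key]
    have h5 : 0 < U - L := sub_pos.2 (lt_of_le_of_lt hL hwU)
    nlinarith [h4, h5, mul_pos h5 h5]

private lemma Qneg' (y : ℝ) (h0 : 0 < y) (h2 : y < 2) :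
    2*(1 - Real.exp (-y))^2 - (y^2 + 4*y)*(1 - Real.exp (-y)) + 2*y^2 < 0 :=
  quad_interp' (Real.exp (-y)) _ _ _ _ (expLB5' y h0.le) (expUB6' y h0.le)
    (QLneg' y h0 h2) (QUneg' y h0 h2)

private lemma Nneg' (y : ℝ) (h0 : 0 < y) (h2 : y < 2) :
    (2 + y^2 - 4*y)*(Real.exp y)^2 + (y^2 + 4*y - 4)*Real.exp y + 2 < 0 := by
  have hQ := Qneg' y h0 h2
  have he : Real.exp y ≠ 0 := (Real.exp_pos y).ne'
  have hid : (2 + y^2 - 4*y)*(Real.exp y)^2 + (y^2 + 4*y - 4)*Real.exp y + 2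
      = (Real.exp y)^2 * (2*(1 - Real.exp (-y))^2 - (y^2 + 4*y)*(1 - Real.exp (-y)) + 2*y^2) := by
    rw [Real.exp_neg]
    field_simp
    ring
  rw [hid]
  exact mul_neg_of_pos_of_neg (by positivity) hQ

private lemma hasDerivAt_gfun {y : ℝ} (hy : 0 < y) : HasDerivAt gfun (gfun1 y) y := by
  have hne : Real.exp y - 1 ≠ 0 := ne_of_gt (expm1_pos' hy)
  have h := (hasDerivAt_pow 2 y).div ((Real.hasDerivAt_exp y).sub_const 1) hne
  exact h.congr_deriv (by unfold gfun1; push_cast; ring)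

private lemma hasDerivAt_gfun1 {y : ℝ} (hy : 0 < y) : HasDerivAt gfun1 (gfun2 y) y := by
  have hpos := expm1_pos' hy
  have hne : Real.exp y - 1 ≠ 0 := ne_of_gt hpos
  have hne2 : (Real.exp y - 1)^2 ≠ 0 := pow_ne_zero 2 hne
  have hA : HasDerivAt (fun y : ℝ => 2*y*(Real.exp y - 1) - y^2*Real.exp y)
      (2*(Real.exp y - 1) + 2*y*Real.exp y - (2*y*Real.exp y + y^2*Real.exp y)) y := by
    have h1 : HasDerivAt (fun y : ℝ => 2*y) 2 y := by
      simpa using (hasDerivAt_id y).const_mul 2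
    have h2 := h1.mul ((Real.hasDerivAt_exp y).sub_const 1)
    have h3 := (hasDerivAt_pow 2 y).mul (Real.hasDerivAt_exp y)
    exact (h2.sub h3).congr_deriv (by push_cast; ring)
  have hB : HasDerivAt (fun y : ℝ => (Real.exp y - 1)^2)
      (2*(Real.exp y - 1)*Real.exp y) y := by
    have := ((Real.hasDerivAt_exp y).sub_const 1).pow 2
    exact this.congr_deriv (by push_cast; ring)
  have h := hA.div hB hne2
  refine h.congr_deriv ?_
  symm
  unfold gfun2
  rw [div_eq_div_iff (by positivity) (by positivity)]
  ring

/-- Let `r(y) = y² e^{-y} / (1 - e^{-y})` for `y > 0`, extended by `r(0) = 0`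
(note that in Lean the formula itself already evaluates to `0` at `y = 0` since
division by zero is zero). If `y_max` is the unique maximizer of `r` on `(0, ∞)`,
then `r` is strictly concave on `[0, y_max]`. -/
theorem stmt1 (ymax : ℝ) (hpos : 0 < ymax)
    (hmax : ∀ y : ℝ, 0 < y →
      y ^ 2 * Real.exp (-y) / (1 - Real.exp (-y)) ≤
        ymax ^ 2 * Real.exp (-ymax) / (1 - Real.exp (-ymax)))
    (huniq : ∀ y : ℝ, 0 < y →
      (∀ z : ℝ, 0 < z →
        z ^ 2 * Real.exp (-z) / (1 - Real.exp (-z)) ≤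
          y ^ 2 * Real.exp (-y) / (1 - Real.exp (-y))) → y = ymax) :
    StrictConcaveOn ℝ (Set.Icc 0 ymax)
      (fun y : ℝ => y ^ 2 * Real.exp (-y) / (1 - Real.exp (-y))) := by
  -- step 1 : ymax ≤ 2
  have hym2 : ymax ≤ 2 := by
    by_contra h
    push_neg at h
    have hA := hmax (3/2) (by norm_num)
    rw [req', req'] at hA
    have hE2 : (0:ℝ) < Real.exp 2 - 1 := expm1_pos' (by norm_num)
    have hEy : 0 < Real.exp ymax - 1 := expm1_pos' (by linarith)
    have hkey : Real.exp ymax > ymax^2 * Real.exp 2 / 4 := by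
      have h1 : Real.exp ((ymax - 2)/2) > ymax/2 := by
        have := Real.add_one_lt_exp (x := (ymax - 2)/2) (by intro hc; nlinarith)
        linarith
      have h2 : Real.exp (ymax - 2) > (ymax/2)^2 := by
        have : Real.exp ((ymax-2)/2) * Real.exp ((ymax-2)/2) = Real.exp (ymax - 2) := by
          rw [← Real.exp_add]; ring_nf
        nlinarith [Real.exp_pos ((ymax-2)/2)]
      have h3 : Real.exp ymax = Real.exp 2 * Real.exp (ymax - 2) := by
        rw [← Real.exp_add]; ring_nf
      nlinarith [Real.exp_pos 2]
    have hB : gfun ymax < 4 / (Real.exp 2 - 1) := by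
      unfold gfun
      rw [div_lt_div_iff₀ hEy hE2]
      have h4 : (4:ℝ) ≤ ymax^2 := by nlinarith
      nlinarith
    have hC : 4 / (Real.exp 2 - 1) ≤ gfun (3/2) := by
      unfold gfun
      have hE32 : (0:ℝ) < Real.exp (3/2) - 1 := expm1_pos' (by norm_num)
      rw [div_le_div_iff₀ hE2 hE32]
      have hgt : 16 * Real.exp (3/2) < 9 * Real.exp 2 + 7 := by
        have hsq : (16 * Real.exp (3/2))^2 = 256 * Real.exp 3 := by
          have : Real.exp (3/2) * Real.exp (3/2) = Real.exp 3 := by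
            rw [← Real.exp_add]; norm_num
          nlinarith [this]
        have he1 := Real.exp_one_gt_d9
        have he2 := Real.exp_one_lt_d9
        have h3 : Real.exp 3 = (Real.exp 1)^3 := by
          rw [← Real.exp_nat_mul]; norm_num
        have h2 : Real.exp 2 = (Real.exp 1)^2 := by
          rw [← Real.exp_nat_mul]; norm_num
        have hlt : (16 * Real.exp (3/2))^2 < (9 * Real.exp 2 + 7)^2 := by
          rw [hsq, h3, h2]
          nlinarith [he1, he2]
        have hpos9 : (0:ℝ) < 9 * Real.exp 2 + 7 := by positivity
        nlinarith [Real.exp_pos (3/2), hlt, hpos9]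
      nlinarith
    linarith [hA, lt_of_lt_of_le hB hC]
  -- step 2 : rewrite the function as gfun
  have hfeq : (fun y : ℝ => y ^ 2 * Real.exp (-y) / (1 - Real.exp (-y))) = gfun :=
    funext req'
  rw [hfeq]
  -- step 3 : apply strict concavity criterion
  apply strictConcaveOn_of_deriv2_neg (convex_Icc 0 ymax)
  · -- continuity
    intro x hx
    rcases eq_or_lt_of_le hx.1 with rfl | hx0
    · -- at 0 : squeeze
      have hbound : ∀ y ∈ Set.Icc (0:ℝ) ymax, gfun y ∈ Set.Icc 0 y := by
        intro y hy
        rcases eq_or_lt_of_le hy.1 with rfl | hy0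
        · constructor <;> simp [gfun]
        · have hd := expm1_pos' hy0
          constructor
          · exact div_nonneg (by positivity) hd.le
          · unfold gfun
            rw [div_le_iff₀ hd]
            have := Real.add_one_le_exp y
            nlinarith
      have h0 : gfun 0 = 0 := by simp [gfun]
      rw [ContinuousWithinAt, h0]
      apply tendsto_of_tendsto_of_tendsto_of_le_of_le'
        (tendsto_const_nhds) ((continuous_id.tendsto 0).mono_left nhdsWithin_le_nhds)
      · exact Filter.eventually_of_mem self_mem_nhdsWithin
          (fun y hy => (hbound y hy).1)
      · exact Filter.eventually_of_mem self_mem_nhdsWithin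
          (fun y hy => (hbound y hy).2)
    · -- at x > 0 : continuity of quotient
      have hd := expm1_pos' hx0
      have : ContinuousAt gfun x := by
        unfold gfun
        exact ContinuousAt.div (by fun_prop) (by fun_prop) hd.ne'
      exact this.continuousWithinAt
  · -- second derivative negative on interior
    intro x hx
    rw [interior_Icc] at hx
    have hx0 : 0 < x := hx.1
    have hx2 : x < 2 := lt_of_lt_of_le hx.2 hym2
    have hEv : deriv gfun =ᶠ[nhds x] gfun1 := by
      filter_upwards [isOpen_Ioi.mem_nhds (Set.mem_Ioi.2 hx0)] with y hy
      exact (hasDerivAt_gfun hy).deriv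
    have h2 : deriv^[2] gfun x = gfun2 x := by
      rw [show deriv^[2] gfun = deriv (deriv gfun) from rfl]
      rw [hEv.deriv_eq]
      exact (hasDerivAt_gfun1 hx0).deriv
    rw [h2]
    unfold gfun2
    apply div_neg_of_neg_of_pos
    · exact Nneg' x hx0 hx2
    · exact pow_pos (expm1_pos' hx0) 3
end

section
/- Let g : [0,1] → ℝ be continuous, let n > 0 and let μ* be a finite Borel measure on [0,1] with μ*([0,1]) = n and ∫ x dμ*(x) ≤ 1. Suppose μ* maximizes the linear functional μ ↦ ∫ g dμ over all finite Borel measures μ on [0,1] satisfying μ([0,1]) = n and ∫ x dμ(x) ≤ 1. Then there exist constants u₁, u₂ ∈ ℝ with u₂ ≥ 0, and with u₂ = 0 whenever ∫ x dμ*(x) < 1, such that g(x) = u₁ + u₂ x for μ*-almost every x ∈ [0,1], and g(x) ≤ u₁ + u₂ x for all x ∈ [0,1]. -/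
open MeasureTheory Filter

/-- First-order necessary optimality (Kuhn–Tucker) condition: if a finite Borel
measure `μ*` on `[0,1]` with total mass `n > 0` and total volume `∫ x dμ* ≤ 1`
maximizes the linear functional `μ ↦ ∫ g dμ` (for continuous `g`) over all such
measures, then there are constants `u₁, u₂` with `u₂ ≥ 0` (and `u₂ = 0` whenever
`∫ x dμ* < 1`) such that `g(x) = u₁ + u₂ x` for `μ*`-a.e. `x` and
`g(x) ≤ u₁ + u₂ x` for all `x ∈ [0,1]`. -/
theorem stmt5 (g : ℝ → ℝ) (hg : ContinuousOn g (Set.Icc 0 1))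
    (n : ℝ) (hn : 0 < n)
    (μs : Measure ℝ) [IsFiniteMeasure μs]
    (hsupp : μs (Set.Icc 0 1)ᶜ = 0)
    (hmass : μs (Set.Icc 0 1) = ENNReal.ofReal n)
    (hvol : (∫ x in Set.Icc (0 : ℝ) 1, x ∂μs) ≤ 1)
    (hopt : ∀ μ : Measure ℝ, μ (Set.Icc 0 1)ᶜ = 0 →
      μ (Set.Icc 0 1) = ENNReal.ofReal n →
      (∫ x in Set.Icc (0 : ℝ) 1, x ∂μ) ≤ 1 →
      (∫ x in Set.Icc (0 : ℝ) 1, g x ∂μ) ≤ ∫ x in Set.Icc (0 : ℝ) 1, g x ∂μs) :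
    ∃ u₁ u₂ : ℝ, 0 ≤ u₂ ∧
      ((∫ x in Set.Icc (0 : ℝ) 1, x ∂μs) < 1 → u₂ = 0) ∧
      (∀ᵐ x ∂μs, g x = u₁ + u₂ * x) ∧
      (∀ x ∈ Set.Icc (0 : ℝ) 1, g x ≤ u₁ + u₂ * x) := by
  set I := Set.Icc (0:ℝ) 1 with hIdef
  have hIm : MeasurableSet I := measurableSet_Icc
  have hIc : IsCompact I := isCompact_Icc
  have hne : I.Nonempty := ⟨0, by constructor <;> norm_num⟩
  have h0I : (0:ℝ) ∈ I := ⟨le_refl 0, by norm_num⟩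
  set V := ∫ x in I, g x ∂μs with hVdef
  set V₁ := ∫ x in I, x ∂μs with hV₁def
  -- restrict = self
  have hres : μs.restrict I = μs := by
    apply Measure.restrict_eq_self_of_ae_mem
    exact ae_iff.mpr (by simpa [Set.compl_def] using hsupp)
  -- integrability
  have hgint : IntegrableOn g I μs := hg.integrableOn_compact hIc
  have haffint : ∀ a b : ℝ, IntegrableOn (fun x => a + b * x) I μs :=
    fun a b => (Continuous.continuousOn (by continuity)).integrableOn_compact hIc
  -- affine integral evaluation
  have haffeval : ∀ a b : ℝ, ∫ x in I, (a + b * x) ∂μs = a * n + b * V₁ := by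
    intro a b
    rw [integral_add ((integrableOn_const_iff (C := a) enorm_ne_top).mpr (Or.inr (measure_lt_top _ _)))
      ((continuous_id'.continuousOn.integrableOn_compact hIc).const_mul b)]
    rw [integral_const, MeasureTheory.integral_const_mul]
    simp [Measure.restrict_apply_univ, measureReal_def, hmass, ENNReal.toReal_ofReal hn.le]
    ring
  -- two-point measures comparison
  have key : ∀ c₁ c₂ x₁ x₂ : ℝ, 0 ≤ c₁ → 0 ≤ c₂ → x₁ ∈ I → x₂ ∈ I →
      c₁ + c₂ = n → c₁ * x₁ + c₂ * x₂ ≤ 1 →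
      c₁ * g x₁ + c₂ * g x₂ ≤ V := by
    intro c₁ c₂ x₁ x₂ hc₁ hc₂ hx₁ hx₂ hsum hvol'
    set μ : Measure ℝ := ENNReal.ofReal c₁ • Measure.dirac x₁
      + ENNReal.ofReal c₂ • Measure.dirac x₂ with hμ
    have hdres : ∀ x : ℝ, x ∈ I → (Measure.dirac x).restrict I = Measure.dirac x := by
      intro x hx
      apply Measure.restrict_eq_self_of_ae_mem
      rw [MeasureTheory.ae_dirac_eq]
      exact hx
    have hint : ∀ f : ℝ → ℝ, ∫ x in I, f x ∂μ = c₁ * f x₁ + c₂ * f x₂ := by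
      intro f
      have h1 : Integrable f (ENNReal.ofReal c₁ • Measure.dirac x₁ : Measure ℝ) := by
        refine Integrable.smul_measure ?_ ENNReal.ofReal_ne_top
        exact (integrable_const (f x₁)).congr (by rw [MeasureTheory.ae_dirac_eq]; rfl)
      have h2 : Integrable f (ENNReal.ofReal c₂ • Measure.dirac x₂ : Measure ℝ) := by
        refine Integrable.smul_measure ?_ ENNReal.ofReal_ne_top
        exact (integrable_const (f x₂)).congr (by rw [MeasureTheory.ae_dirac_eq]; rfl)
      rw [hμ, Measure.restrict_add, Measure.restrict_smul, Measure.restrict_smul,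
        hdres x₁ hx₁, hdres x₂ hx₂, integral_add_measure h1 h2,
        integral_smul_measure, integral_smul_measure, integral_dirac, integral_dirac,
        ENNReal.toReal_ofReal hc₁, ENNReal.toReal_ofReal hc₂]
      simp
    have hd1 : ∀ x : ℝ, x ∈ I → Measure.dirac x Iᶜ = 0 := by
      intro x hx
      rw [Measure.dirac_apply' _ hIm.compl]
      simp [Set.indicator_of_notMem, hx]
    have hμc : μ Iᶜ = 0 := by
      rw [hμ]
      simp [Measure.add_apply, hd1 x₁ hx₁, hd1 x₂ hx₂]
    have hμI : μ I = ENNReal.ofReal n := by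
      rw [hμ]
      simp only [Measure.add_apply, Measure.smul_apply, smul_eq_mul]
      rw [Measure.dirac_apply' _ hIm, Measure.dirac_apply' _ hIm]
      simp [Set.indicator_of_mem, hx₁, hx₂, ← ENNReal.ofReal_add hc₁ hc₂, hsum]
    have hμvol : (∫ x in I, x ∂μ) ≤ 1 := by
      rw [hint (fun x => x)]; exact hvol'
    have := hopt μ hμc hμI hμvol
    rwa [hint g] at this
  -- maximizer existence
  have hmax : ∀ u : ℝ, ∃ x ∈ I, ∀ y ∈ I, g y - u * y ≤ g x - u * x := by
    intro u
    obtain ⟨x, hx, hmx⟩ := hIc.exists_isMaxOn hne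
      (hg.sub ((continuous_const.mul continuous_id).continuousOn))
    exact ⟨x, hx, fun y hy => hmx hy⟩
  -- main reduction
  suffices h : ∃ (u₂ x₁ x₂ c₁ c₂ : ℝ), 0 ≤ u₂ ∧ x₁ ∈ I ∧ x₂ ∈ I ∧ 0 ≤ c₁ ∧ 0 ≤ c₂ ∧
      c₁ + c₂ = n ∧ c₁ * x₁ + c₂ * x₂ ≤ 1 ∧ u₂ * (c₁ * x₁ + c₂ * x₂) = u₂ ∧
      (∀ y ∈ I, g y - u₂ * y ≤ g x₁ - u₂ * x₁) ∧
      (g x₂ - u₂ * x₂ = g x₁ - u₂ * x₁) by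
    obtain ⟨u₂, x₁, x₂, c₁, c₂, hu₂0, hx₁I, hx₂I, hc₁, hc₂, hsum, hvol2, hslack,
      hmax1, heq2⟩ := h
    set u₁ := g x₁ - u₂ * x₁ with hu₁def
    have hub : ∀ x ∈ I, g x ≤ u₁ + u₂ * x := by
      intro x hx
      have := hmax1 x hx
      rw [hu₁def]; linarith
    have e1 : g x₁ = u₁ + u₂ * x₁ := by rw [hu₁def]; ring
    have e2 : g x₂ = u₁ + u₂ * x₂ := by rw [hu₁def]; linarith [heq2]
    have hlow : n * u₁ + u₂ ≤ V := by
      have hval : c₁ * g x₁ + c₂ * g x₂ = n * u₁ + u₂ * (c₁ * x₁ + c₂ * x₂) := by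
        rw [e1, e2, ← hsum]; ring
      have := key c₁ c₂ x₁ x₂ hc₁ hc₂ hx₁I hx₂I hsum hvol2
      rw [hval, hslack] at this
      exact this
    have hup : V ≤ u₁ * n + u₂ * V₁ := by
      have := setIntegral_mono_on hgint (haffint u₁ u₂) hIm hub
      rwa [haffeval u₁ u₂] at this
    have huv : u₂ * V₁ = u₂ := by
      have h1 : u₂ ≤ u₂ * V₁ := by linarith
      have h2 : u₂ * V₁ ≤ u₂ * 1 := mul_le_mul_of_nonneg_left hvol hu₂0
      rw [mul_one] at h2
      linarith
    have hVlt : V₁ < 1 → u₂ = 0 := by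
      intro hV1
      by_contra hne0
      have hpos : 0 < u₂ := lt_of_le_of_ne hu₂0 (Ne.symm hne0)
      nlinarith
    have hVeq : V = n * u₁ + u₂ := by
      have : u₁ * n + u₂ * V₁ = n * u₁ + u₂ := by rw [huv]; ring
      linarith
    have hzero : ∫ x in I, (u₁ + u₂ * x - g x) ∂μs = 0 := by
      rw [integral_sub (haffint u₁ u₂) hgint, haffeval]
      rw [← hVdef]
      linarith
    have hnonneg : 0 ≤ᵐ[μs.restrict I] fun x => u₁ + u₂ * x - g x := by
      filter_upwards [ae_restrict_mem hIm] with x hx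
      have := hub x hx
      simp only [Pi.zero_apply]
      linarith
    have haeeq : (fun x => u₁ + u₂ * x - g x) =ᵐ[μs.restrict I] 0 :=
      (integral_eq_zero_iff_of_nonneg_ae hnonneg ((haffint u₁ u₂).sub hgint)).mp hzero
    rw [hres] at haeeq
    refine ⟨u₁, u₂, hu₂0, hVlt, ?_, hub⟩
    filter_upwards [haeeq] with x hx
    simp only [Pi.zero_apply] at hx
    linarith
  -- construction of the multiplier and the two points
  by_cases hA : ∃ x ∈ I, (∀ y ∈ I, g y ≤ g x) ∧ n * x ≤ 1
  · -- easy case: unconstrained maximizer is feasible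
    obtain ⟨x₀, hx₀I, hx₀max, hx₀le⟩ := hA
    refine ⟨0, x₀, x₀, n, 0, le_refl 0, hx₀I, hx₀I, hn.le, le_refl 0, by ring,
      by linarith, by ring, ?_, rfl⟩
    intro y hy
    simpa using hx₀max y hy
  · -- hard case: volume constraint binds
    push_neg at hA
    have hA' : ∀ x ∈ I, (∀ y ∈ I, g y ≤ g x) → 1 < n * x := by
      intro x hx hmx
      exact hA x hx hmx
    -- limit lemma for maximizers
    have hlim : ∀ (u : ℝ) (uk xk : ℕ → ℝ) (x : ℝ),
        Tendsto uk atTop (nhds u) → Tendsto xk atTop (nhds x) →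
        (∀ k, xk k ∈ I) → (∀ k, ∀ y ∈ I, g y - uk k * y ≤ g (xk k) - uk k * xk k) →
        x ∈ I ∧ ∀ y ∈ I, g y - u * y ≤ g x - u * x := by
      intro u uk xk x hu hx hxk hmaxk
      have hxI : x ∈ I := isClosed_Icc.mem_of_tendsto hx (Eventually.of_forall hxk)
      refine ⟨hxI, fun y hy => ?_⟩
      have hgx : Tendsto (fun k => g (xk k)) atTop (nhds (g x)) :=
        (hg x hxI).tendsto.comp
          (tendsto_nhdsWithin_iff.mpr ⟨hx, Eventually.of_forall hxk⟩)
      have hT : Tendsto (fun k => (g (xk k) - uk k * xk k) - (g y - uk k * y)) atTop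
          (nhds ((g x - u * x) - (g y - u * y))) :=
        (hgx.sub (hu.mul hx)).sub (tendsto_const_nhds.sub (hu.mul tendsto_const_nhds))
      have h0 : 0 ≤ (g x - u * x) - (g y - u * y) :=
        ge_of_tendsto hT (Eventually.of_forall fun k => by linarith [hmaxk k y hy])
      linarith
    -- bound on g
    obtain ⟨C, hC⟩ : ∃ C, ∀ x ∈ I, |g x| ≤ C := by
      obtain ⟨C, hC⟩ := hIc.exists_bound_of_continuousOn hg
      exact ⟨C, fun x hx => by simpa using hC x hx⟩
    have hC0 : 0 ≤ C := le_trans (abs_nonneg _) (hC 0 h0I)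
    -- dual multiplier set
    set S : Set ℝ := {u : ℝ | 0 ≤ u ∧
      ∀ x ∈ I, (∀ y ∈ I, g y - u * y ≤ g x - u * x) → 1 < n * x} with hSdef
    have hS0 : (0:ℝ) ∈ S := by
      refine ⟨le_refl 0, fun x hx hmx => ?_⟩
      exact hA' x hx (fun y hy => by have := hmx y hy; linarith)
    have hSbdd : BddAbove S := by
      refine ⟨2 * C * n, fun u hu => ?_⟩
      obtain ⟨hu0, hall⟩ := hu
      obtain ⟨x, hxI, hmx⟩ := hmax u
      have h1 : 1 < n * x := hall x hxI hmx
      have h2 : g 0 - u * 0 ≤ g x - u * x := hmx 0 h0I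
      have h3 : u * x ≤ 2 * C := by
        have h4 := abs_le.mp (hC x hxI)
        have h5 := abs_le.mp (hC 0 h0I)
        nlinarith
      nlinarith
    set u₂ := sSup S with hu₂def
    have hu₂0 : 0 ≤ u₂ := le_csSup hSbdd hS0
    -- get x₂ with 1 ≤ n * x₂
    have hx₂ex : ∃ x₂ ∈ I, 1 ≤ n * x₂ ∧ ∀ y ∈ I, g y - u₂ * y ≤ g x₂ - u₂ * x₂ := by
      have hseq : ∀ k : ℕ, ∃ u ∈ S, u₂ - 1 / (k + 1) < u := by
        intro k
        apply exists_lt_of_lt_csSup ⟨0, hS0⟩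
        have : (0:ℝ) < 1 / (k + 1) := by positivity
        linarith
      choose uk hukS hukgt using hseq
      have hukle : ∀ k, uk k ≤ u₂ := fun k => le_csSup hSbdd (hukS k)
      have huktend : Tendsto uk atTop (nhds u₂) := by
        have h1 : Tendsto (fun k : ℕ => u₂ - 1 / (k + 1)) atTop (nhds u₂) := by
          simpa using Tendsto.sub
            (tendsto_const_nhds : Tendsto (fun _ : ℕ => u₂) atTop (nhds u₂))
            tendsto_one_div_add_atTop_nhds_zero_nat
        exact tendsto_of_tendsto_of_tendsto_of_le_of_le h1 tendsto_const_nhds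
          (fun k => (hukgt k).le) hukle
      choose xk hxkI hxkmax using fun k => hmax (uk k)
      have hxkbig : ∀ k, 1 < n * xk k := fun k => (hukS k).2 (xk k) (hxkI k) (hxkmax k)
      obtain ⟨x₂, hx₂I, φ, hφ, hφtend⟩ := hIc.tendsto_subseq hxkI
      have hres2 := hlim u₂ (uk ∘ φ) (xk ∘ φ) x₂
        (huktend.comp hφ.tendsto_atTop) hφtend (fun k => hxkI (φ k))
        (fun k => hxkmax (φ k))
      refine ⟨x₂, hx₂I, ?_, hres2.2⟩
      have : Tendsto (fun k => n * xk (φ k)) atTop (nhds (n * x₂)) :=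
        (tendsto_const_nhds).mul hφtend
      exact ge_of_tendsto this (Eventually.of_forall fun k => (hxkbig (φ k)).le)
    -- get x₁ with n * x₁ ≤ 1
    have hx₁ex : ∃ x₁ ∈ I, n * x₁ ≤ 1 ∧ ∀ y ∈ I, g y - u₂ * y ≤ g x₁ - u₂ * x₁ := by
      have hseq : ∀ k : ℕ, ∃ x ∈ I, (∀ y ∈ I, g y - (u₂ + 1 / (k + 1)) * y
          ≤ g x - (u₂ + 1 / (k + 1)) * x) ∧ n * x ≤ 1 := by
        intro k
        set u := u₂ + 1 / (k + 1 : ℝ) with hu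
        have hunotS : u ∉ S := by
          intro huS
          have hle : u ≤ u₂ := by rw [hu₂def]; exact le_csSup hSbdd huS
          have hpos : (0:ℝ) < 1 / (k + 1 : ℝ) := by positivity
          rw [hu] at hle
          linarith
        have hu0 : 0 ≤ u := by
          have : (0:ℝ) < 1 / (k + 1 : ℝ) := by positivity
          simp only [hu]; linarith
        rw [hSdef] at hunotS
        simp only [Set.mem_setOf_eq] at hunotS
        push_neg at hunotS
        obtain ⟨x, hxI, hmx, hle⟩ := hunotS hu0
        exact ⟨x, hxI, hmx, hle⟩
      choose xk hxkI hxkmax hxkle using hseq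
      have huktend : Tendsto (fun k : ℕ => u₂ + 1 / (k + 1 : ℝ)) atTop (nhds u₂) := by
        simpa using Tendsto.add
          (tendsto_const_nhds : Tendsto (fun _ : ℕ => u₂) atTop (nhds u₂))
          tendsto_one_div_add_atTop_nhds_zero_nat
      obtain ⟨x₁, hx₁I, φ, hφ, hφtend⟩ := hIc.tendsto_subseq hxkI
      have hres1 := hlim u₂ ((fun k : ℕ => u₂ + 1 / (k + 1 : ℝ)) ∘ φ) (xk ∘ φ) x₁
        (huktend.comp hφ.tendsto_atTop) hφtend (fun k => hxkI (φ k))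
        (fun k => hxkmax (φ k))
      refine ⟨x₁, hx₁I, ?_, hres1.2⟩
      have : Tendsto (fun k => n * xk (φ k)) atTop (nhds (n * x₁)) :=
        (tendsto_const_nhds).mul hφtend
      exact le_of_tendsto this (Eventually.of_forall fun k => hxkle (φ k))
    obtain ⟨x₂, hx₂I, hx₂big, hmax2⟩ := hx₂ex
    obtain ⟨x₁, hx₁I, hx₁small, hmax1⟩ := hx₁ex
    have heq2 : g x₂ - u₂ * x₂ = g x₁ - u₂ * x₁ :=
      le_antisymm (hmax1 x₂ hx₂I) (hmax2 x₁ hx₁I)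
    have hx₁₂ : x₁ ≤ x₂ := le_of_mul_le_mul_left (hx₁small.trans hx₂big) hn
    rcases eq_or_lt_of_le hx₁₂ with heq | hlt
    · -- x₁ = x₂, so n * x₁ = 1
      subst heq
      have hnx : n * x₁ = 1 := le_antisymm hx₁small hx₂big
      refine ⟨u₂, x₁, x₁, n, 0, hu₂0, hx₁I, hx₁I, hn.le, le_refl 0, by ring,
        by linarith, ?_, hmax1, rfl⟩
      have : n * x₁ + 0 * x₁ = 1 := by linarith
      rw [this, mul_one]
    · -- x₁ < x₂
      set c₂ := (1 - n * x₁) / (x₂ - x₁) with hc₂def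
      have hd : 0 < x₂ - x₁ := by linarith
      have hc₂0 : 0 ≤ c₂ := div_nonneg (by linarith) hd.le
      have hc₂n : c₂ ≤ n := by
        rw [hc₂def, div_le_iff₀ hd]
        nlinarith
      have hmul : c₂ * (x₂ - x₁) = 1 - n * x₁ := by
        rw [hc₂def]
        field_simp
      have hvol2 : (n - c₂) * x₁ + c₂ * x₂ = 1 := by linear_combination hmul
      refine ⟨u₂, x₁, x₂, n - c₂, c₂, hu₂0, hx₁I, hx₂I, by linarith, hc₂0, by ring,
        by linarith, ?_, hmax1, heq2⟩
      rw [hvol2, mul_one]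
end

section
/- Let λ > 0 and let μ and ν be finite Borel measures on (0,1] such that x ↦ log(1 − e^{-λx}) is integrable with respect to both μ and ν. For t ∈ [0,1] define T₂(t) = exp( −λ ∫ x d((1−t)μ + tν)(x) ) + exp( ∫ log(1 − e^{-λx}) d((1−t)μ + tν)(x) ). Then T₂ is differentiable at t = 0 from the right, and its derivative equals ∫ t₂(x) dν(x) − ∫ t₂(x) dμ(x), where t₂(x) = −λ x · exp(−λ ∫ y dμ(y)) + log(1 − e^{-λx}) · exp( ∫ log(1 − e^{-λy}) dμ(y) ). In other words, the functional μ ↦ T₂₁(μ) + T₂₀(μ), with T₂₁(μ) = e^{−λ∫x dμ} (the probability that no mouse repopulates) and T₂₀(μ) = e^{∫ log(1 − e^{-λx}) dμ} (the probability that all mice repopulate), has directional derivative at μ in the direction ν − μ given by the gradient function t₂. -/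
open MeasureTheory
open scoped ENNReal

lemma aux_int_id (μ : Measure ℝ) [IsFiniteMeasure μ]
    (hμs : μ (Set.Ioc 0 1)ᶜ = 0) : Integrable (fun x : ℝ => x) μ := by
  have hb : ∀ᵐ x ∂μ, ‖x‖ ≤ 1 := by
    have : ∀ᵐ x ∂μ, x ∈ Set.Ioc (0:ℝ) 1 := by
      rw [ae_iff]
      exact hμs
    filter_upwards [this] with x hx
    rw [Real.norm_eq_abs, abs_le]
    constructor <;> [linarith [hx.1]; exact hx.2]
  exact (integrable_const (1:ℝ)).mono' measurable_id.aestronglyMeasurable hb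

lemma aux_mix (μ ν : Measure ℝ) [IsFiniteMeasure μ] [IsFiniteMeasure ν]
    (f : ℝ → ℝ) (hfμ : Integrable f μ) (hfν : Integrable f ν)
    (t : ℝ) (ht : t ∈ Set.Icc (0:ℝ) 1) :
    ∫ x, f x ∂((ENNReal.ofReal (1 - t)) • μ + (ENNReal.ofReal t) • ν)
      = (1 - t) * ∫ x, f x ∂μ + t * ∫ x, f x ∂ν := by
  rw [integral_add_measure (hfμ.smul_measure ENNReal.ofReal_ne_top)
    (hfν.smul_measure ENNReal.ofReal_ne_top), integral_smul_measure,
    integral_smul_measure, ENNReal.toReal_ofReal (by linarith [ht.2]),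
    ENNReal.toReal_ofReal ht.1]
  simp [smul_eq_mul]

/-- Directional differentiability of the spoilt-experiment probability
`T₂(μ; λ) = T₂₁(μ; λ) + T₂₀(μ; λ)` with `T₂₁(μ) = e^{−λ∫x dμ}` and
`T₂₀(μ) = e^{∫ log(1 − e^{-λx}) dμ}`: along the segment `(1−t)μ + tν`,
`t ↦ T₂((1−t)μ + tν)` is differentiable from the right at `t = 0` with
derivative `∫ t₂ dν − ∫ t₂ dμ`, where the gradient function is
`t₂(x) = −λx T₂₁(μ) + log(1 − e^{-λx}) T₂₀(μ)`. -/
theorem stmt13 (lam : ℝ) (hlam : 0 < lam)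
    (μ ν : Measure ℝ) [IsFiniteMeasure μ] [IsFiniteMeasure ν]
    (hμs : μ (Set.Ioc 0 1)ᶜ = 0) (hνs : ν (Set.Ioc 0 1)ᶜ = 0)
    (hμi : Integrable (fun x : ℝ => Real.log (1 - Real.exp (-(lam * x)))) μ)
    (hνi : Integrable (fun x : ℝ => Real.log (1 - Real.exp (-(lam * x)))) ν) :
    let m : ℝ → Measure ℝ := fun t => (ENNReal.ofReal (1 - t)) • μ + (ENNReal.ofReal t) • ν
    let T₂ : ℝ → ℝ := fun t =>
      Real.exp (-(lam * ∫ x, x ∂(m t)))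
        + Real.exp (∫ x, Real.log (1 - Real.exp (-(lam * x))) ∂(m t))
    let t₂ : ℝ → ℝ := fun x =>
      -(lam * x) * Real.exp (-(lam * ∫ y, y ∂μ))
        + Real.log (1 - Real.exp (-(lam * x))) *
            Real.exp (∫ y, Real.log (1 - Real.exp (-(lam * y))) ∂μ)
    HasDerivWithinAt T₂ ((∫ x, t₂ x ∂ν) - ∫ x, t₂ x ∂μ) (Set.Icc 0 1) 0 := by
  intro m T₂ t₂
  have hidμ := aux_int_id μ hμs
  have hidν := aux_int_id ν hνs
  set A := ∫ y, y ∂μ with hA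
  set B := ∫ y, y ∂ν with hB
  set C := ∫ y, Real.log (1 - Real.exp (-(lam * y))) ∂μ with hC
  set D := ∫ y, Real.log (1 - Real.exp (-(lam * y))) ∂ν with hD
  -- the smooth surrogate
  set g : ℝ → ℝ := fun t =>
    Real.exp (-(lam * A) + (-(lam * (B - A))) * t) + Real.exp (C + (D - C) * t) with hg
  have hderiv : HasDerivAt g ((-(lam * (B - A))) * Real.exp (-(lam * A))
      + (D - C) * Real.exp C) 0 := by
    have h1 : HasDerivAt (fun t : ℝ => -(lam * A) + (-(lam * (B - A))) * t)
        (-(lam * (B - A))) 0 := by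
      simpa using ((hasDerivAt_id (0:ℝ)).const_mul (-(lam * (B - A)))).const_add (-(lam * A))
    have h2 : HasDerivAt (fun t : ℝ => C + (D - C) * t) (D - C) 0 := by
      simpa using ((hasDerivAt_id (0:ℝ)).const_mul (D - C)).const_add C
    have h := h1.exp.add h2.exp
    simp only [mul_zero, add_zero] at h
    exact h.congr_deriv (by ring)
  -- compute target integrals
  have hνint : ∫ x, t₂ x ∂ν = -(lam * B) * Real.exp (-(lam * A)) + D * Real.exp C := by
    have : ∫ x, t₂ x ∂ν
        = ∫ x, (-(lam) * Real.exp (-(lam * A))) * x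
            + (Real.exp C) * Real.log (1 - Real.exp (-(lam * x))) ∂ν := by
      apply integral_congr_ae; filter_upwards with x; simp [t₂]; ring
    rw [this, integral_add ((hidν.const_mul _)) ((hνi.const_mul _)),
      integral_const_mul, integral_const_mul]
    simp only [← hB, ← hD]; ring
  have hμint : ∫ x, t₂ x ∂μ = -(lam * A) * Real.exp (-(lam * A)) + C * Real.exp C := by
    have : ∫ x, t₂ x ∂μ
        = ∫ x, (-(lam) * Real.exp (-(lam * A))) * x
            + (Real.exp C) * Real.log (1 - Real.exp (-(lam * x))) ∂μ := by
      apply integral_congr_ae; filter_upwards with x; simp [t₂]; ring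
    rw [this, integral_add ((hidμ.const_mul _)) ((hμi.const_mul _)),
      integral_const_mul, integral_const_mul]
    simp only [← hA, ← hC]; ring
  have hval : (∫ x, t₂ x ∂ν) - ∫ x, t₂ x ∂μ
      = (-(lam * (B - A))) * Real.exp (-(lam * A)) + (D - C) * Real.exp C := by
    rw [hνint, hμint]; ring
  rw [hval]
  refine (hderiv.hasDerivWithinAt).congr ?_ ?_
  · intro t ht
    have e1 := aux_mix μ ν (fun x => x) hidμ hidν t ht
    have e2 := aux_mix μ ν _ hμi hνi t ht
    simp only [T₂, m, g, e1, e2, ← hA, ← hB, ← hC, ← hD]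
    ring_nf
  · have e1 := aux_mix μ ν (fun x => x) hidμ hidν 0 (by norm_num)
    have e2 := aux_mix μ ν _ hμi hνi 0 (by norm_num)
    simp only [T₂, m, g, e1, e2, ← hA, ← hB, ← hC, ← hD]
    ring_nf
end
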